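/- Let f : ℝ^d → ℝ be L-smooth and let g_μ(x, u) = ((f(x + μu) − f(x))/μ) u with u ~ N(0, I_d). Then E_u[‖g_μ(x, u)‖²] ≤ (μ² L² (d + 6)³)/2 + 2(d + 4)‖∇f(x)‖². -/

import Mathlib

open MeasureTheory Real Set Module
open scoped RealInnerProductSpace

/-!
By the descent lemma, `f (x + μ • u) - f x = μ ⟪∇f x, u⟫ + r` with `|r| ≤ L μ² ‖u‖² / 2`, so
`‖g_μ(x, u)‖² ≤ 2 ⟪∇f x, u⟫² ‖u‖² + (L² μ² / 2) ‖u‖⁶` pointwise, and it remains to compute two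
Gaussian moments exactly. Integrating in polar coordinates and using `Γ(s + 1) = s Γ(s)` gives
`E ‖u‖^(m+2) = (d + m) E ‖u‖^m`, hence `E ‖u‖⁶ = d (d + 2) (d + 4) ≤ (d + 6)³`. Reflections
preserve the Gaussian, so `E ⟪c, u⟫² ‖u‖²` depends only on `‖c‖`; summing over an orthonormal
basis gives `d · E ⟪c, u⟫² ‖u‖² = ‖c‖² E ‖u‖⁴ = d (d + 2) ‖c‖²`.
-/

section LipschitzGradient

variable {E : Type*} [NormedAddCommGroup E] [InnerProductSpace ℝ E] [CompleteSpace E]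

theorem abs_sub_sub_inner_le_of_lipschitz_gradient {f : E → ℝ} {f' : E → E}
    (hf : ∀ x, HasGradientAt f (f' x) x) {L : ℝ} (hlip : ∀ x y, ‖f' x - f' y‖ ≤ L * ‖x - y‖)
    (x v : E) : |f (x + v) - f x - ⟪f' x, v⟫| ≤ L / 2 * ‖v‖ ^ 2 := by
  have hderiv (t : ℝ) : HasDerivAt (fun t : ℝ => f (x + t • v) - f x - t * ⟪f' x, v⟫)
      (⟪f' (x + t • v), v⟫ - ⟪f' x, v⟫) t := by
    have hline : HasDerivAt (fun t : ℝ => x + t • v) v t := by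
      simpa using ((hasDerivAt_id t).smul_const v).const_add x
    have hcomp : HasDerivAt (fun t : ℝ => f (x + t • v)) ⟪f' (x + t • v), v⟫ t := by
      simpa [Function.comp_def] using (hf (x + t • v)).hasFDerivAt.comp_hasDerivAt t hline
    exact (hcomp.sub_const (f x)).sub (hasDerivAt_mul_const ⟪f' x, v⟫)
  have hB (t : ℝ) : HasDerivAt (fun t : ℝ => L / 2 * ‖v‖ ^ 2 * t ^ 2) (L * ‖v‖ ^ 2 * t) t := by
    refine ((hasDerivAt_pow 2 t).const_mul (L / 2 * ‖v‖ ^ 2)).congr_deriv ?_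
    norm_num
    ring
  have hbound (t : ℝ) (ht : t ∈ Ico (0 : ℝ) 1) :
      ‖⟪f' (x + t • v), v⟫ - ⟪f' x, v⟫‖ ≤ L * ‖v‖ ^ 2 * t := by
    calc ‖⟪f' (x + t • v), v⟫ - ⟪f' x, v⟫‖ = ‖⟪f' (x + t • v) - f' x, v⟫‖ := by
          rw [inner_sub_left]
      _ ≤ ‖f' (x + t • v) - f' x‖ * ‖v‖ := norm_inner_le_norm _ _
      _ ≤ L * ‖t • v‖ * ‖v‖ := by
          gcongr
          simpa using hlip (x + t • v) x
      _ = L * ‖v‖ ^ 2 * t := by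
          rw [norm_smul, Real.norm_of_nonneg ht.1]
          ring
  simpa using image_norm_le_of_norm_deriv_right_le_deriv_boundary
    (fun t _ => (hderiv t).continuousAt.continuousWithinAt)
    (fun t _ => (hderiv t).hasDerivWithinAt) (by simp) hB hbound
    (right_mem_Icc.2 zero_le_one)

theorem sq_slope_le_of_lipschitz_gradient {f : E → ℝ} {f' : E → E}
    (hf : ∀ x, HasGradientAt f (f' x) x) {L : ℝ} (hlip : ∀ x y, ‖f' x - f' y‖ ≤ L * ‖x - y‖)
    (x u : E) (μ : ℝ) :
    ((f (x + μ • u) - f x) / μ) ^ 2 ≤ 2 * ⟪f' x, u⟫ ^ 2 + L ^ 2 * μ ^ 2 / 2 * ‖u‖ ^ 4 := by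
  rcases eq_or_ne μ 0 with rfl | hμ
  · rw [div_zero, zero_pow two_ne_zero]
    positivity
  set q := (f (x + μ • u) - f x) / μ
  set a := ⟪f' x, u⟫
  have hdev : |q - a| ≤ L / 2 * |μ| * ‖u‖ ^ 2 := by
    have htaylor := abs_sub_sub_inner_le_of_lipschitz_gradient hf hlip x (μ • u)
    rw [inner_smul_right, norm_smul, Real.norm_eq_abs, mul_pow, sq_abs] at htaylor
    rw [show q - a = (f (x + μ • u) - f x - μ * a) / μ by simp only [q]; field_simp, abs_div,
      div_le_iff₀ (abs_pos.2 hμ)]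
    calc _ ≤ L / 2 * (μ ^ 2 * ‖u‖ ^ 2) := htaylor
      _ = L / 2 * |μ| * ‖u‖ ^ 2 * |μ| := by rw [← sq_abs μ]; ring
  calc q ^ 2 ≤ 2 * a ^ 2 + 2 * |q - a| ^ 2 := by
        rw [sq_abs]; nlinarith [sq_nonneg (q - 2 * a)]
    _ ≤ 2 * a ^ 2 + 2 * (L / 2 * |μ| * ‖u‖ ^ 2) ^ 2 := by gcongr
    _ = 2 * a ^ 2 + L ^ 2 * μ ^ 2 / 2 * ‖u‖ ^ 4 := by rw [mul_pow, mul_pow, sq_abs]; ring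

end LipschitzGradient

theorem integral_Ioi_pow_mul_exp_neg_sq_div_two (q : ℕ) :
    ∫ y in Ioi (0 : ℝ), y ^ q * exp (-y ^ 2 / 2) =
      (1 / 2 : ℝ) ^ (-((q : ℝ) + 1) / 2) * (1 / 2) * Gamma (((q : ℝ) + 1) / 2) := by
  have := integral_rpow_mul_exp_neg_mul_rpow (p := 2) (q := q) (b := 1 / 2) two_pos
    (neg_one_lt_zero.trans_le (Nat.cast_nonneg q)) one_half_pos
  simp only [rpow_natCast, rpow_two] at this
  rw [← this]
  congr 1 with y
  ring_nf

theorem integral_Ioi_pow_add_two_mul_exp_neg_sq_div_two (q : ℕ) :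
    ∫ y in Ioi (0 : ℝ), y ^ (q + 2) * exp (-y ^ 2 / 2) =
      (q + 1) * ∫ y in Ioi (0 : ℝ), y ^ q * exp (-y ^ 2 / 2) := by
  have hq : ((q : ℝ) + 1) / 2 ≠ 0 := by positivity
  rw [integral_Ioi_pow_mul_exp_neg_sq_div_two, integral_Ioi_pow_mul_exp_neg_sq_div_two,
    Nat.cast_add, Nat.cast_two, show ((q : ℝ) + 2 + 1) / 2 = (q + 1) / 2 + 1 by ring,
    Gamma_add_one hq, show -((q : ℝ) + 2 + 1) / 2 = -(q + 1) / 2 + -1 by ring,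
    rpow_add one_half_pos, rpow_neg_one]
  ring

section GaussianMoments

variable {E : Type*} [NormedAddCommGroup E] [InnerProductSpace ℝ E] [FiniteDimensional ℝ E]
  [MeasurableSpace E] [BorelSpace E]

theorem integrable_norm_pow_mul_exp_neg_sq_div_two (m : ℕ) :
    Integrable (fun x : E => ‖x‖ ^ m * exp (-‖x‖ ^ 2 / 2)) := by
  rcases subsingleton_or_nontrivial E with hE | hE
  · exact (integrable_const (‖(0 : E)‖ ^ m * exp (-‖(0 : E)‖ ^ 2 / 2))).congr
      (.of_forall fun x => by rw [Subsingleton.elim x 0])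
  refine (integrable_fun_norm_addHaar volume (f := fun r => r ^ m * exp (-r ^ 2 / 2))).2 ?_
  have := integrableOn_rpow_mul_exp_neg_mul_sq (b := 1 / 2) one_half_pos
    (s := (finrank ℝ E - 1 + m : ℕ)) (neg_one_lt_zero.trans_le (Nat.cast_nonneg _))
  refine this.congr_fun (fun y _ => ?_) measurableSet_Ioi
  simp only [rpow_natCast, smul_eq_mul, pow_add]
  ring_nf

theorem integral_norm_pow_add_two_mul_exp_neg_sq_div_two (m : ℕ) :
    ∫ x : E, ‖x‖ ^ (m + 2) * exp (-‖x‖ ^ 2 / 2) =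
      (finrank ℝ E + m) * ∫ x : E, ‖x‖ ^ m * exp (-‖x‖ ^ 2 / 2) := by
  rcases subsingleton_or_nontrivial E with hE | hE
  · have hx (x : E) : ‖x‖ = 0 := by rw [Subsingleton.elim x 0, norm_zero]
    rcases m with _ | m <;> simp [hx, finrank_zero_of_subsingleton]
  have hn : 0 < finrank ℝ E := finrank_pos
  rw [integral_fun_norm_addHaar volume (fun r => r ^ (m + 2) * exp (-r ^ 2 / 2)),
    integral_fun_norm_addHaar volume (fun r => r ^ m * exp (-r ^ 2 / 2))]
  have hpow (k : ℕ) : (fun y : ℝ => y ^ (finrank ℝ E - 1) • (y ^ k * exp (-y ^ 2 / 2))) =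
      fun y => y ^ (finrank ℝ E - 1 + k) * exp (-y ^ 2 / 2) := by
    ext y; rw [smul_eq_mul, ← mul_assoc, ← pow_add]
  rw [hpow, hpow, ← add_assoc, integral_Ioi_pow_add_two_mul_exp_neg_sq_div_two]
  have hcast : ((finrank ℝ E - 1 + m : ℕ) : ℝ) + 1 = finrank ℝ E + m := by
    rw [Nat.cast_add, Nat.cast_sub hn]; ring
  rw [hcast, nsmul_eq_mul, nsmul_eq_mul, smul_eq_mul, smul_eq_mul]
  ring

theorem integral_exp_neg_sq_norm_div_two :
    ∫ x : E, exp (-‖x‖ ^ 2 / 2) = (2 * π) ^ ((finrank ℝ E : ℝ) / 2) := by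
  have := GaussianFourier.integral_rexp_neg_mul_sq_norm (V := E) one_half_pos
  rw [show π / (1 / 2) = 2 * π by ring] at this
  rw [← this]
  congr 1 with x
  ring_nf

theorem integral_comp_inner_norm_eq_of_norm_eq {G : Type*} [NormedAddCommGroup G]
    [NormedSpace ℝ G] (F : ℝ → ℝ → G) {a b : E} (h : ‖a‖ = ‖b‖) :
    ∫ x, F ⟪a, x⟫ ‖x‖ = ∫ x, F ⟪b, x⟫ ‖x‖ := by
  set R := (ℝ ∙ (a - b))ᗮ.reflection
  have hR (x : E) : ⟪a, R x⟫ = ⟪b, x⟫ := by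
    rw [← Submodule.reflection_sub h, LinearIsometryEquiv.inner_map_eq_flip,
      Submodule.reflection_symm]
  rw [← R.measurePreserving.integral_comp R.toHomeomorph.measurableEmbedding]
  simp only [hR, LinearIsometryEquiv.norm_map]

theorem integrable_inner_sq_mul (c : E) {g : ℝ → ℝ} (hg : Measurable g)
    (hint : Integrable fun x : E => ‖x‖ ^ 2 * g ‖x‖) :
    Integrable fun x : E => ⟪c, x⟫ ^ 2 * g ‖x‖ := by
  refine (hint.const_mul (‖c‖ ^ 2)).mono (by fun_prop) (.of_forall fun x => ?_)
  rw [norm_mul, norm_mul, norm_mul, norm_pow, norm_pow, norm_pow, Real.norm_eq_abs, norm_norm,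
    norm_norm, ← mul_assoc, ← mul_pow]
  gcongr
  exact abs_real_inner_le_norm c x

theorem finrank_mul_integral_inner_sq_mul (c : E) {g : ℝ → ℝ} (hg : Measurable g)
    (hint : Integrable fun x : E => ‖x‖ ^ 2 * g ‖x‖) :
    finrank ℝ E * ∫ x : E, ⟪c, x⟫ ^ 2 * g ‖x‖ = ‖c‖ ^ 2 * ∫ x : E, ‖x‖ ^ 2 * g ‖x‖ := by
  let b := stdOrthonormalBasis ℝ E
  have hrot (i : Fin (finrank ℝ E)) :
      ∫ x : E, ⟪c, x⟫ ^ 2 * g ‖x‖ = ‖c‖ ^ 2 * ∫ x : E, ⟪b i, x⟫ ^ 2 * g ‖x‖ := by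
    rw [integral_comp_inner_norm_eq_of_norm_eq (fun t r => t ^ 2 * g r) (b := ‖c‖ • b i)
      (by simp [norm_smul, b.norm_eq_one i]), ← integral_const_mul]
    simp only [inner_smul_left, conj_trivial]
    congr 1 with x
    ring
  calc finrank ℝ E * ∫ x : E, ⟪c, x⟫ ^ 2 * g ‖x‖
      = ∑ i, ‖c‖ ^ 2 * ∫ x : E, ⟪b i, x⟫ ^ 2 * g ‖x‖ := by
        simp [← hrot]
    _ = ‖c‖ ^ 2 * ∫ x : E, ‖x‖ ^ 2 * g ‖x‖ := by
        rw [← Finset.mul_sum,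
          ← integral_finsetSum _ fun i _ => integrable_inner_sq_mul (b i) hg hint]
        simp_rw [← Finset.sum_mul, b.sum_sq_inner_right]

theorem integral_norm_sq_mul_exp_neg_sq_div_two :
    ∫ x : E, ‖x‖ ^ 2 * exp (-‖x‖ ^ 2 / 2) = finrank ℝ E * (2 * π) ^ ((finrank ℝ E : ℝ) / 2) := by
  simpa [integral_exp_neg_sq_norm_div_two] using
    integral_norm_pow_add_two_mul_exp_neg_sq_div_two (E := E) 0

theorem integral_norm_pow_four_mul_exp_neg_sq_div_two :
    ∫ x : E, ‖x‖ ^ 4 * exp (-‖x‖ ^ 2 / 2) =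
      finrank ℝ E * (finrank ℝ E + 2) * (2 * π) ^ ((finrank ℝ E : ℝ) / 2) := by
  rw [integral_norm_pow_add_two_mul_exp_neg_sq_div_two 2,
    integral_norm_sq_mul_exp_neg_sq_div_two]
  push_cast
  ring

theorem integral_norm_pow_six_mul_exp_neg_sq_div_two :
    ∫ x : E, ‖x‖ ^ 6 * exp (-‖x‖ ^ 2 / 2) =
      finrank ℝ E * (finrank ℝ E + 2) * (finrank ℝ E + 4) *
        (2 * π) ^ ((finrank ℝ E : ℝ) / 2) := by
  rw [integral_norm_pow_add_two_mul_exp_neg_sq_div_two 4,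
    integral_norm_pow_four_mul_exp_neg_sq_div_two]
  push_cast
  ring

theorem integral_inner_sq_mul_norm_sq_mul_exp_neg_sq_div_two (c : E) :
    ∫ x : E, ⟪c, x⟫ ^ 2 * (‖x‖ ^ 2 * exp (-‖x‖ ^ 2 / 2)) =
      (finrank ℝ E + 2) * ‖c‖ ^ 2 * (2 * π) ^ ((finrank ℝ E : ℝ) / 2) := by
  rcases subsingleton_or_nontrivial E with hE | hE
  · simp [Subsingleton.elim c 0]
  have hn : (finrank ℝ E : ℝ) ≠ 0 := Nat.cast_ne_zero.2 finrank_pos.ne'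
  have h := finrank_mul_integral_inner_sq_mul c (g := fun r => r ^ 2 * exp (-r ^ 2 / 2))
    (by fun_prop) (by simpa [← mul_assoc, ← pow_add] using
      integrable_norm_pow_mul_exp_neg_sq_div_two (E := E) 4)
  simp only [← mul_assoc, ← pow_add] at h
  rw [integral_norm_pow_four_mul_exp_neg_sq_div_two] at h
  refine mul_left_cancel₀ hn ?_
  simp only [mul_assoc] at h ⊢
  linear_combination h

theorem integral_norm_sq_slope_smul_mul_exp_neg_sq_div_two_le {f : E → ℝ} {f' : E → E}
    (hf : ∀ x, HasGradientAt f (f' x) x) {L : ℝ} (hlip : ∀ x y, ‖f' x - f' y‖ ≤ L * ‖x - y‖)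
    (x : E) (μ : ℝ) :
    ∫ u : E, ‖((f (x + μ • u) - f x) / μ) • u‖ ^ 2 * exp (-‖u‖ ^ 2 / 2) ≤
      (2 * ((finrank ℝ E + 2) * ‖f' x‖ ^ 2) +
        L ^ 2 * μ ^ 2 / 2 * (finrank ℝ E * (finrank ℝ E + 2) * (finrank ℝ E + 4))) *
        (2 * π) ^ ((finrank ℝ E : ℝ) / 2) := by
  set K := L ^ 2 * μ ^ 2 / 2
  have hpoint (u : E) :
      ‖((f (x + μ • u) - f x) / μ) • u‖ ^ 2 * exp (-‖u‖ ^ 2 / 2) ≤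
        2 * (⟪f' x, u⟫ ^ 2 * (‖u‖ ^ 2 * exp (-‖u‖ ^ 2 / 2))) +
          K * (‖u‖ ^ 6 * exp (-‖u‖ ^ 2 / 2)) := by
    rw [norm_smul, mul_pow, Real.norm_eq_abs, sq_abs, mul_assoc]
    calc _ ≤ (2 * ⟪f' x, u⟫ ^ 2 + K * ‖u‖ ^ 4) * (‖u‖ ^ 2 * exp (-‖u‖ ^ 2 / 2)) := by
          gcongr; exact sq_slope_le_of_lipschitz_gradient hf hlip x u μ
      _ = _ := by ring
  have hint_inner : Integrable fun u : E => ⟪f' x, u⟫ ^ 2 * (‖u‖ ^ 2 * exp (-‖u‖ ^ 2 / 2)) := by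
    refine integrable_inner_sq_mul (f' x) (g := fun r => r ^ 2 * exp (-r ^ 2 / 2))
      (by fun_prop) ?_
    simpa [← mul_assoc, ← pow_add] using integrable_norm_pow_mul_exp_neg_sq_div_two (E := E) 4
  have hint_six := integrable_norm_pow_mul_exp_neg_sq_div_two (E := E) 6
  calc _ ≤ ∫ u : E, 2 * (⟪f' x, u⟫ ^ 2 * (‖u‖ ^ 2 * exp (-‖u‖ ^ 2 / 2))) +
        K * (‖u‖ ^ 6 * exp (-‖u‖ ^ 2 / 2)) :=
        integral_mono_of_nonneg (.of_forall fun u => by positivity)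
          ((hint_inner.const_mul 2).add (hint_six.const_mul K)) (.of_forall hpoint)
    _ = _ := by
        rw [integral_add (hint_inner.const_mul 2) (hint_six.const_mul K), integral_const_mul,
          integral_const_mul, integral_inner_sq_mul_norm_sq_mul_exp_neg_sq_div_two,
          integral_norm_pow_six_mul_exp_neg_sq_div_two]
        ring

end GaussianMoments

theorem gaussian_estimator_second_moment_general
    (d : ℕ) (f : EuclideanSpace ℝ (Fin d) → ℝ)
    (f' : EuclideanSpace ℝ (Fin d) → EuclideanSpace ℝ (Fin d))
    (hf : ∀ x, HasGradientAt f (f' x) x)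
    (L : ℝ)
    (hlip : ∀ x y, ‖f' x - f' y‖ ≤ L * ‖x - y‖)
    (μ : ℝ)
    (x : EuclideanSpace ℝ (Fin d)) :
    (2 * π) ^ (-(d : ℝ) / 2) *
        ∫ u : EuclideanSpace ℝ (Fin d),
          ‖((f (x + μ • u) - f x) / μ) • u‖ ^ 2 * Real.exp (-‖u‖ ^ 2 / 2) ≤
      μ ^ 2 * L ^ 2 * ((d : ℝ) + 6) ^ 3 / 2 + 2 * ((d : ℝ) + 4) * ‖f' x‖ ^ 2 := by
  have hbound := integral_norm_sq_slope_smul_mul_exp_neg_sq_div_two_le hf hlip x μ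
  rw [finrank_euclideanSpace_fin] at hbound
  have hnormalize : (2 * π) ^ (-(d : ℝ) / 2) * (2 * π) ^ ((d : ℝ) / 2) = 1 := by
    rw [← rpow_add (by positivity), neg_div, neg_add_cancel, rpow_zero]
  have hcube : (d : ℝ) * (d + 2) * (d + 4) ≤ (d + 6) ^ 3 := by
    nlinarith [(Nat.cast_nonneg d : (0 : ℝ) ≤ d)]
  calc _ ≤ (2 * π) ^ (-(d : ℝ) / 2) * ((2 * ((d + 2) * ‖f' x‖ ^ 2) +
        L ^ 2 * μ ^ 2 / 2 * (d * (d + 2) * (d + 4))) * (2 * π) ^ ((d : ℝ) / 2)) := by gcongr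
    _ = 2 * (d + 2) * ‖f' x‖ ^ 2 + L ^ 2 * μ ^ 2 / 2 * (d * (d + 2) * (d + 4)) := by
        rw [mul_left_comm, hnormalize]; ring
    _ ≤ _ := by
        nlinarith [mul_le_mul_of_nonneg_left hcube (sq_nonneg (L * μ)), sq_nonneg ‖f' x‖]

/-- For L-smooth `f` and `g_μ(x,u) = ((f(x+μu) − f(x))/μ) u` with `u ~ N(0, I_d)`:
`E_u ‖g_μ(x,u)‖² ≤ μ² L² (d+6)³ / 2 + 2(d+4) ‖∇f(x)‖²`. -/
theorem gaussian_estimator_second_moment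
    (d : ℕ) (f : EuclideanSpace ℝ (Fin d) → ℝ)
    (f' : EuclideanSpace ℝ (Fin d) → EuclideanSpace ℝ (Fin d))
    (hf : ∀ x, HasGradientAt f (f' x) x)
    (L : ℝ) (hL : 0 ≤ L)
    (hlip : ∀ x y, ‖f' x - f' y‖ ≤ L * ‖x - y‖)
    (μ : ℝ) (hμ : 0 < μ)
    (x : EuclideanSpace ℝ (Fin d)) :
    (2 * π) ^ (-(d : ℝ) / 2) *
        ∫ u : EuclideanSpace ℝ (Fin d),
          ‖((f (x + μ • u) - f x) / μ) • u‖ ^ 2 * Real.exp (-‖u‖ ^ 2 / 2) ≤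
      μ ^ 2 * L ^ 2 * ((d : ℝ) + 6) ^ 3 / 2 + 2 * ((d : ℝ) + 4) * ‖f' x‖ ^ 2 :=
  gaussian_estimator_second_moment_general d f f' hf L hlip μ x
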